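/- arXiv:2408.09379 — 4 statements merged into one kernel-verified Lean document; each statement's English description precedes it below -/
import Mathlib

section
/- Under the crystallization condition, the effective channel can be read off from the pilot response: if h : ℤ×ℤ → ℂ is supported on S = {(k,l) : 0 ≤ k ≤ k_max, |l| ≤ l_max/2} with k_max < M and l_max < N, and y[k,l] = Σ_{n,m∈ℤ} h[k−k_p−nM, l−l_p−mN] e^{j2πn l_p/N} e^{j2π(l−l_p−mN)(k_p+nM)/(MN)}, then for every (k,l) ∈ S one has h[k,l] = y[k+k_p, l+l_p] · e^{−j2π k_p l/(MN)}. -/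
/-- Under the crystallization condition, the effective channel taps can be read off
from the received pilot response. -/
theorem stmt3 (M N : ℕ) (hM : 0 < M) (hN : 0 < N)
    (kmax lmax : ℕ) (hk : kmax < M) (hl : lmax < N)
    (kp lp : ℤ) (h : ℤ → ℤ → ℂ)
    (hsupp : ∀ k l : ℤ, h k l ≠ 0 → 0 ≤ k ∧ k ≤ (kmax : ℤ) ∧ 2 * |l| ≤ (lmax : ℤ))
    (y : ℤ → ℤ → ℂ)
    (hy : ∀ k l : ℤ, y k l = ∑ᶠ q : ℤ × ℤ,
      h (k - kp - q.1 * M) (l - lp - q.2 * N) *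
        Complex.exp (2 * Real.pi * Complex.I * ((q.1 : ℂ) * lp / N)) *
        Complex.exp (2 * Real.pi * Complex.I *
          (((l : ℂ) - lp - q.2 * N) * ((kp : ℂ) + q.1 * M) / (M * N)))) :
    ∀ k l : ℤ, 0 ≤ k → k ≤ (kmax : ℤ) → 2 * |l| ≤ (lmax : ℤ) →
      h k l = y (k + kp) (l + lp) *
        Complex.exp (-(2 * Real.pi * Complex.I) * ((kp : ℂ) * l / (M * N))) := by
  intro k l hk0 hkm hlm
  rw [hy, finsum_eq_single _ ((0, 0) : ℤ × ℤ)]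
  · simp only
    rw [show k + kp - kp - (0 : ℤ) * M = k by ring,
        show l + lp - lp - (0 : ℤ) * N = l by ring]
    rw [mul_assoc, mul_assoc, ← Complex.exp_add, ← Complex.exp_add]
    rw [show 2 * Real.pi * Complex.I * (((0 : ℤ) : ℂ) * lp / N) +
        (2 * Real.pi * Complex.I *
            ((((l + lp : ℤ) : ℂ) - (lp : ℂ) - ((0 : ℤ) : ℂ) * N) *
              ((kp : ℂ) + ((0 : ℤ) : ℂ) * M) / (M * N)) +
          -(2 * Real.pi * Complex.I) * ((kp : ℂ) * l / (M * N))) = 0 by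
      push_cast; ring]
    rw [Complex.exp_zero, mul_one]
  · rintro ⟨n, m⟩ hq
    simp only
    have hz : h (k + kp - kp - n * M) (l + lp - lp - m * N) = 0 := by
      by_contra hne
      obtain ⟨h1, h2, h3⟩ := hsupp _ _ hne
      have habs2 : -(lmax : ℤ) ≤ 2 * (l + lp - lp - m * N) ∧
          2 * (l + lp - lp - m * N) ≤ (lmax : ℤ) := by
        constructor <;> [nlinarith [abs_nonneg (l + lp - lp - m * N), neg_abs_le (l + lp - lp - m * N)];
          nlinarith [le_abs_self (l + lp - lp - m * N)]]
      have habsl : -(lmax : ℤ) ≤ 2 * l ∧ 2 * l ≤ (lmax : ℤ) := by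
        constructor <;> [nlinarith [neg_abs_le l]; nlinarith [le_abs_self l]]
      have hMZ : (0 : ℤ) < (M : ℤ) := by exact_mod_cast hM
      have hNZ : (0 : ℤ) < (N : ℤ) := by exact_mod_cast hN
      have hkM : (kmax : ℤ) < (M : ℤ) := by exact_mod_cast hk
      have hlN : (lmax : ℤ) < (N : ℤ) := by exact_mod_cast hl
      have hn : n = 0 := by
        rcases lt_trichotomy n 0 with h' | h' | h'
        · exfalso
          have hn1 : n ≤ -1 := by omega
          nlinarith [mul_le_mul_of_nonneg_right hn1 hMZ.le]
        · exact h'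
        · exfalso
          have hn1 : 1 ≤ n := h'
          nlinarith [mul_le_mul_of_nonneg_right hn1 hMZ.le]
      have hm : m = 0 := by
        rcases lt_trichotomy m 0 with h' | h' | h' 
        · exfalso
          have hm1 : m ≤ -1 := by omega
          nlinarith [mul_le_mul_of_nonneg_right hm1 hNZ.le]
        · exact h'
        · exfalso
          have hm1 : 1 ≤ m := h'
          nlinarith [mul_le_mul_of_nonneg_right hm1 hNZ.le]
      exact hq (by simp [hn, hm])
    rw [hz, zero_mul, zero_mul]
end

section
/- If |k_{p1} − k_{p2}| = M/2 (M even), then the auto-ambiguity A_{x_p,x_p}[k,l] of the two interleaved pilots is nonzero only at points of the lattice Λ₂ = {(nM/2, 2mN) : n,m ∈ ℤ}. -/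
lemma key1 (M M2 : ℕ) (hM2 : 0 < M2) (hM : M = 2 * M2) (m a b : ℤ) (hm : Odd m)
    (hab : a - b = (M2 : ℤ)) :
    Complex.exp (-(2 * Real.pi * Complex.I) * ((m : ℂ) * a / (M : ℂ)))
      = - Complex.exp (-(2 * Real.pi * Complex.I) * ((m : ℂ) * b / (M : ℂ))) := by
  have hM2c : (M2 : ℂ) ≠ 0 := Nat.cast_ne_zero.mpr hM2.ne'
  have hMc : (M : ℂ) = 2 * (M2 : ℂ) := by rw [hM]; push_cast; ring
  have hMne : (M : ℂ) ≠ 0 := by rw [hMc]; exact mul_ne_zero two_ne_zero hM2c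
  have hac : (a : ℂ) = (b : ℂ) + (M2 : ℂ) := by
    have : (a : ℂ) - b = (M2 : ℂ) := by exact_mod_cast congrArg (Int.cast : ℤ → ℂ) hab
    linear_combination this
  have split : -(2 * (Real.pi : ℂ) * Complex.I) * ((m : ℂ) * a / (M : ℂ))
      = -(2 * (Real.pi : ℂ) * Complex.I) * ((m : ℂ) * b / (M : ℂ))
        + (m : ℂ) * (-((Real.pi : ℂ) * Complex.I)) := by
    rw [hac, hMc]; field_simp; ring
  rw [split, Complex.exp_add]
  have : Complex.exp ((m : ℂ) * (-((Real.pi : ℂ) * Complex.I))) = -1 := by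
    rw [Complex.exp_int_mul, Complex.exp_neg, Complex.exp_pi_mul_I]
    rw [inv_neg, inv_one, hm.neg_one_zpow]
  rw [this]; ring

lemma key (M M2 : ℕ) (hM2 : 0 < M2) (hM : M = 2 * M2) (m a b : ℤ) (hm : Odd m)
    (hab : a - b = (M2 : ℤ) ∨ b - a = (M2 : ℤ)) :
    Complex.exp (-(2 * Real.pi * Complex.I) * ((m : ℂ) * a / (M : ℂ)))
      + Complex.exp (-(2 * Real.pi * Complex.I) * ((m : ℂ) * b / (M : ℂ))) = 0 := by
  rcases hab with hab | hab
  · rw [key1 M M2 hM2 hM m a b hm hab]; ring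
  · rw [key1 M M2 hM2 hM m b a hm hab]; ring

/-- When the two pilots are spaced M/2 apart, the auto-ambiguity is supported on
the lattice Λ₂ = {(n·M/2, 2m·N)}. -/
theorem stmt9 (M M2 N : ℕ) (hM2 : 0 < M2) (hM : M = 2 * M2) (hN : 0 < N)
    (Ep : ℝ) (hEp : 0 < Ep) (kp1 kp2 : ℤ) (hsp : |kp1 - kp2| = (M2 : ℤ))
    (A : ℤ → ℤ → ℂ)
    (hA : ∀ k l : ℤ, A k l =
      (if (N : ℤ) ∣ l ∧ (M : ℤ) ∣ (k - (kp1 - kp2)) then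
        ((Ep / 2 : ℝ) : ℂ) *
          Complex.exp (-(2 * Real.pi * Complex.I) * (((l / (N : ℤ) : ℤ) : ℂ) * kp2 / M))
       else 0)
      + (if (N : ℤ) ∣ l ∧ (M : ℤ) ∣ (k - (kp2 - kp1)) then
        ((Ep / 2 : ℝ) : ℂ) *
          Complex.exp (-(2 * Real.pi * Complex.I) * (((l / (N : ℤ) : ℤ) : ℂ) * kp1 / M))
       else 0)
      + (if (N : ℤ) ∣ l ∧ (M : ℤ) ∣ k then
        ((Ep / 2 : ℝ) : ℂ) *
          (Complex.exp (-(2 * Real.pi * Complex.I) * (((l / (N : ℤ) : ℤ) : ℂ) * kp1 / M)) +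
           Complex.exp (-(2 * Real.pi * Complex.I) * (((l / (N : ℤ) : ℤ) : ℂ) * kp2 / M)))
       else 0)) :
    ∀ k l : ℤ, A k l ≠ 0 → ∃ n m : ℤ, k = n * M2 ∧ l = 2 * m * N := by
  intro k l h
  have hNz : (N : ℤ) ≠ 0 := by exact_mod_cast hN.ne'
  have hd : kp1 - kp2 = (M2 : ℤ) ∨ kp1 - kp2 = -(M2 : ℤ) :=
    (abs_eq (by positivity)).mp hsp
  have hdvdd : (M2 : ℤ) ∣ (kp1 - kp2) := by rcases hd with h' | h' <;> simp [h']
  have hM2M : (M2 : ℤ) ∣ (M : ℤ) := ⟨2, by rw [hM]; push_cast; ring⟩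
  -- N ∣ l
  have hNl : (N : ℤ) ∣ l := by
    by_contra hNl
    rw [hA] at h
    simp [hNl] at h
  -- M2 ∣ k
  have hM2k : (M2 : ℤ) ∣ k := by
    by_contra hk2
    have c1 : ¬ (M : ℤ) ∣ (k - (kp1 - kp2)) := fun hc => hk2 (by
      have h1 : (M2 : ℤ) ∣ (k - (kp1 - kp2)) := hM2M.trans hc
      have : k = (k - (kp1 - kp2)) + (kp1 - kp2) := by ring
      rw [this]; exact dvd_add h1 hdvdd)
    have c2 : ¬ (M : ℤ) ∣ (k - (kp2 - kp1)) := fun hc => hk2 (by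
      have h1 : (M2 : ℤ) ∣ (k - (kp2 - kp1)) := hM2M.trans hc
      have : k = (k - (kp2 - kp1)) - (kp1 - kp2) := by ring
      rw [this]; exact dvd_sub h1 hdvdd)
    have c3 : ¬ (M : ℤ) ∣ k := fun hc => hk2 (hM2M.trans hc)
    rw [hA] at h
    simp [c1, c2, c3] at h
  -- the quotient
  obtain ⟨m0, hm0⟩ := id hNl
  have hq : l / (N : ℤ) = m0 := by rw [hm0]; exact Int.mul_ediv_cancel_left m0 hNz
  -- m0 is even
  have heven : Even m0 := by
    by_contra hodd
    rw [Int.not_even_iff_odd] at hodd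
    apply h
    rw [hA, hq]
    have hMd2 : ∀ d : ℤ, d = (M2 : ℤ) ∨ d = -(M2 : ℤ) → (M : ℤ) ∣ 2 * d := by
      rintro d (rfl | rfl)
      · exact ⟨1, by push_cast [hM]; ring⟩
      · exact ⟨-1, by push_cast [hM]; ring⟩
    by_cases h3 : (M : ℤ) ∣ k
    · have hnd : ¬ (M : ℤ) ∣ (M2 : ℤ) := fun hc => by
        have := Int.le_of_dvd (by exact_mod_cast hM2) hc
        omega
      have c1 : ¬ ((N : ℤ) ∣ l ∧ (M : ℤ) ∣ (k - (kp1 - kp2))) := fun hc => by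
        have hdv : (M : ℤ) ∣ (kp1 - kp2) := by
          have he : kp1 - kp2 = k - (k - (kp1 - kp2)) := by ring
          rw [he]; exact dvd_sub h3 hc.2
        rcases hd with h' | h' <;> rw [h'] at hdv
        · exact hnd hdv
        · exact hnd ((dvd_neg).mp hdv)
      have c2 : ¬ ((N : ℤ) ∣ l ∧ (M : ℤ) ∣ (k - (kp2 - kp1))) := fun hc => by
        have hdv : (M : ℤ) ∣ (kp2 - kp1) := by
          have he : kp2 - kp1 = k - (k - (kp2 - kp1)) := by ring
          rw [he]; exact dvd_sub h3 hc.2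
        have h21 : kp2 - kp1 = (M2 : ℤ) ∨ kp2 - kp1 = -(M2 : ℤ) := by omega
        rcases h21 with h' | h' <;> rw [h'] at hdv
        · exact hnd hdv
        · exact hnd ((dvd_neg).mp hdv)
      have hab : kp1 - kp2 = (M2 : ℤ) ∨ kp2 - kp1 = (M2 : ℤ) := by omega
      rw [if_neg c1, if_neg c2, if_pos ⟨hNl, h3⟩, zero_add, zero_add,
        key M M2 hM2 hM m0 kp1 kp2 hodd hab, mul_zero]
    · by_cases h1 : (M : ℤ) ∣ (k - (kp1 - kp2))
      · have h2 : (M : ℤ) ∣ (k - (kp2 - kp1)) := by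
          have he : k - (kp2 - kp1) = (k - (kp1 - kp2)) + 2 * (kp1 - kp2) := by ring
          rw [he]; exact dvd_add h1 (hMd2 _ hd)
        have hab : kp2 - kp1 = (M2 : ℤ) ∨ kp1 - kp2 = (M2 : ℤ) := by omega
        rw [if_pos ⟨hNl, h1⟩, if_pos ⟨hNl, h2⟩, if_neg (fun hc => h3 hc.2), add_zero,
          ← mul_add, key M M2 hM2 hM m0 kp2 kp1 hodd hab, mul_zero]
      · have h2 : ¬ (M : ℤ) ∣ (k - (kp2 - kp1)) := fun hc => h1 (by
          have he : k - (kp1 - kp2) = (k - (kp2 - kp1)) + 2 * (kp2 - kp1) := by ring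
          rw [he]
          exact dvd_add hc (hMd2 _ (by omega)))
        rw [if_neg (fun hc => h1 hc.2), if_neg (fun hc => h2 hc.2),
          if_neg (fun hc => h3 hc.2)]
        norm_num
  obtain ⟨t, ht⟩ := heven
  obtain ⟨n, hn⟩ := hM2k
  exact ⟨n, t, by rw [hn]; ring, by rw [hm0, ht]; push_cast; ring⟩
end

section
/- Theorem (lattice support of regularly spaced interleaved pilots): with Q interleaved pilots at delay positions k_{p_i} = (i−1)M/Q for i = 1,…,Q (Q divides M), the auto-ambiguity function A_{x_p,x_p}[k,l] of the pilot x_p[k,l] = √(E_p/Q) Σ_{i=1}^Q Σ_{n,m∈ℤ} δ[k−k_{p_i}−nM]δ[l−mN] is supported on the lattice Λ_Q = {(nM/Q, mQN) : n,m ∈ ℤ}; i.e., A_{x_p,x_p}[k,l] = E_p if (k,l) ∈ Λ_Q and 0 otherwise. -/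
open scoped Classical

/-- Theorem 1: the auto-ambiguity of Q regularly spaced interleaved pilots is
supported on the lattice Λ_Q = {(n·M/Q, m·QN)}, where it equals E_p. -/
theorem stmt11 (M N Q : ℕ) (hM : 0 < M) (hN : 0 < N) (hQ : 0 < Q) (hQM : Q ∣ M)
    (Ep : ℝ) (hEp : 0 < Ep) (x : ℤ → ℤ → ℂ)
    (hx : ∀ k l : ℤ, x k l =
      if ∃ i ∈ Finset.range Q, ∃ n m : ℤ,
          k = (i : ℤ) * ((M : ℤ) / Q) + n * M ∧ l = m * N
      then ((Real.sqrt (Ep / Q) : ℝ) : ℂ) else 0) :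
    ∀ k l : ℤ,
      (∑ k' ∈ Finset.range M, ∑ l' ∈ Finset.range N,
        x k' l' * (starRingEnd ℂ) (x ((k' : ℤ) - k) ((l' : ℤ) - l)) *
          Complex.exp (-(2 * Real.pi * Complex.I) * ((l : ℂ) * ((k' : ℂ) - k) / (M * N))))
      = if ∃ n m : ℤ, k = n * ((M : ℤ) / Q) ∧ l = m * ((Q : ℤ) * N)
        then ((Ep : ℝ) : ℂ) else 0 := by
  obtain ⟨d, hd⟩ := hQM
  have hd0 : 0 < d := by
    rcases Nat.eq_zero_or_pos d with h | h
    · subst h; simp at hd; omega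
    · exact h
  have hQz : ((Q : ℤ)) ≠ 0 := by exact_mod_cast hQ.ne'
  have hdz : ((M : ℤ) / Q : ℤ) = (d : ℤ) := by
    subst hd; push_cast; rw [Int.mul_ediv_cancel_left _ hQz]
  set c : ℂ := ((Real.sqrt (Ep / Q) : ℝ) : ℂ) with hc
  have hxs : ∀ a b : ℤ, x a b = if ((d : ℤ) ∣ a ∧ (N : ℤ) ∣ b) then c else 0 := by
    intro a b
    rw [hx a b]
    congr 1
    apply propext
    constructor
    · rintro ⟨i, hi, n, m, rfl, rfl⟩
      rw [hdz]
      exact ⟨⟨(i : ℤ) + n * Q, by push_cast [hd]; ring⟩, ⟨m, (mul_comm _ _)⟩⟩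
    · rintro ⟨⟨t, rfl⟩, ⟨m, rfl⟩⟩
      have h1 : 0 ≤ t % (Q : ℤ) := Int.emod_nonneg t hQz
      have h2 : t % (Q : ℤ) < Q := Int.emod_lt_of_pos t (by exact_mod_cast hQ)
      refine ⟨(t % (Q : ℤ)).toNat, ?_, t / Q, m, ?_, (mul_comm _ _)⟩
      · rw [Finset.mem_range]; omega
      · rw [hdz, Int.toNat_of_nonneg h1]
        push_cast [hd]
        linear_combination (-(d : ℤ)) * (Int.mul_ediv_add_emod t (Q : ℤ))
  intro k l
  have hNz : ((N : ℤ)) ≠ 0 := by exact_mod_cast hN.ne'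
  have hdzz : ((d : ℤ)) ≠ 0 := by exact_mod_cast hd0.ne'
  have hNc : ((N : ℂ)) ≠ 0 := by exact_mod_cast hN.ne'
  have hQc : ((Q : ℂ)) ≠ 0 := by exact_mod_cast hQ.ne'
  have hdc : ((d : ℂ)) ≠ 0 := by exact_mod_cast hd0.ne'
  have hcc : c * (starRingEnd ℂ) c = ((Ep / Q : ℝ) : ℂ) := by
    rw [hc, Complex.conj_ofReal, ← Complex.ofReal_mul,
      Real.mul_self_sqrt (div_nonneg hEp.le (Nat.cast_nonneg Q))]
  have step1 : (∑ k' ∈ Finset.range M, ∑ l' ∈ Finset.range N,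
        x k' l' * (starRingEnd ℂ) (x ((k' : ℤ) - k) ((l' : ℤ) - l)) *
          Complex.exp (-(2 * Real.pi * Complex.I) * ((l : ℂ) * ((k' : ℂ) - k) / (M * N))))
      = ∑ k' ∈ Finset.range M,
        x k' 0 * (starRingEnd ℂ) (x ((k' : ℤ) - k) (0 - l)) *
          Complex.exp (-(2 * Real.pi * Complex.I) * ((l : ℂ) * ((k' : ℂ) - k) / (M * N))) := by
    refine Finset.sum_congr rfl fun k' _ => ?_
    refine (Finset.sum_eq_single_of_mem 0 (Finset.mem_range.mpr hN)
      fun l' hl' hne => ?_).trans (by norm_num)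
    have hnd : ¬ ((N : ℤ) ∣ (l' : ℤ)) := by
      rw [Finset.mem_range] at hl'
      intro hdvd
      have := Int.le_of_dvd (by exact_mod_cast Nat.pos_of_ne_zero hne) hdvd
      omega
    rw [hxs (k' : ℤ) (l' : ℤ), if_neg (fun h => hnd h.2), zero_mul, zero_mul]
  rw [step1]
  by_cases hkl : ((d : ℤ) ∣ k ∧ (N : ℤ) ∣ l)
  · obtain ⟨⟨a, hk⟩, ⟨b, hl⟩⟩ := hkl
    subst hk; subst hl
    set ζ : ℂ := Complex.exp (-(2 * Real.pi * Complex.I) * ((b : ℂ) / Q)) with hζ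
    set w : ℂ := Complex.exp ((2 * Real.pi * Complex.I) * ((b : ℂ) * a / Q)) with hw
    have himg : ((Finset.range Q).image (fun j => j * d)) ⊆ Finset.range M := by
      intro y hy
      simp only [Finset.mem_image, Finset.mem_range] at hy ⊢
      obtain ⟨j, hj, rfl⟩ := hy
      calc j * d < Q * d := (Nat.mul_lt_mul_right hd0).mpr hj
        _ = M := hd.symm
    rw [← Finset.sum_subset himg ?_]
    swap
    · intro y hy hyn
      have hnd : ¬ ((d : ℤ) ∣ (y : ℤ)) := by
        intro hdd
        apply hyn
        have hdy : d ∣ y := by exact_mod_cast hdd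
        obtain ⟨j, rfl⟩ := hdy
        simp only [Finset.mem_image, Finset.mem_range]
        refine ⟨j, ?_, mul_comm _ _⟩
        rw [Finset.mem_range, hd] at hy
        nlinarith
      rw [hxs (y : ℤ) 0, if_neg (fun h => hnd h.1), zero_mul, zero_mul]
    rw [Finset.sum_image (fun a _ b _ h => Nat.eq_of_mul_eq_mul_right hd0 h)]
    have hterm : ∀ j ∈ Finset.range Q,
        (x ((j * d : ℕ) : ℤ) 0 *
          (starRingEnd ℂ) (x (((j * d : ℕ) : ℤ) - (d : ℤ) * a) (0 - (N : ℤ) * b)) *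
          Complex.exp (-(2 * Real.pi * Complex.I) *
            ((((N : ℤ) * b : ℤ) : ℂ) * (((j * d : ℕ) : ℂ) - (((d : ℤ) * a : ℤ) : ℂ)) / (M * N))))
        = (((Ep / Q : ℝ) : ℂ) * w) * ζ ^ j := by
      intro j _
      rw [hxs, hxs, if_pos ⟨⟨(j : ℤ), by push_cast; ring⟩, dvd_zero _⟩,
        if_pos ⟨⟨(j : ℤ) - a, by push_cast; ring⟩, ⟨-b, by ring⟩⟩, hcc]
      have hkey : Complex.exp (-(2 * Real.pi * Complex.I) *
            ((((N : ℤ) * b : ℤ) : ℂ) * (((j * d : ℕ) : ℂ) - (((d : ℤ) * a : ℤ) : ℂ)) / (M * N)))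
          = w * ζ ^ j := by
        rw [hζ, hw, ← Complex.exp_nat_mul, ← Complex.exp_add]
        congr 1
        rw [hd]
        push_cast
        field_simp
        ring
      rw [hkey]
      ring
    rw [Finset.sum_congr rfl hterm, ← Finset.mul_sum]
    by_cases hb : (Q : ℤ) ∣ b
    · obtain ⟨b', rfl⟩ := hb
      have hζ1 : ζ = 1 := by
        rw [hζ, show (-(2 * (Real.pi : ℂ) * Complex.I) * ((((Q : ℤ) * b' : ℤ) : ℂ) / Q))
            = ((-b' : ℤ) : ℂ) * (2 * Real.pi * Complex.I) from by
          push_cast; field_simp]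
        exact Complex.exp_int_mul_two_pi_mul_I _
      have hw1 : w = 1 := by
        rw [hw, show ((2 * (Real.pi : ℂ) * Complex.I) * ((((Q : ℤ) * b' : ℤ) : ℂ) * a / Q))
            = ((b' * a : ℤ) : ℂ) * (2 * Real.pi * Complex.I) from by
          push_cast; field_simp]
        exact Complex.exp_int_mul_two_pi_mul_I _
      rw [hζ1, hw1, if_pos ⟨a, b', by rw [hdz]; ring, by ring⟩]
      simp only [one_pow, Finset.sum_const, Finset.card_range, nsmul_eq_mul, mul_one]
      push_cast
      field_simp
    · have h2pi : (2 * (Real.pi : ℂ) * Complex.I) ≠ 0 := by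
        simp [Complex.I_ne_zero, Real.pi_ne_zero, Complex.ofReal_ne_zero]
      have hζQ : ζ ^ Q = 1 := by
        rw [hζ, ← Complex.exp_nat_mul,
          show ((Q : ℂ) * (-(2 * (Real.pi : ℂ) * Complex.I) * ((b : ℂ) / Q))
            = ((-b : ℤ) : ℂ) * (2 * Real.pi * Complex.I)) from by
          push_cast; field_simp]
        exact Complex.exp_int_mul_two_pi_mul_I _
      have hζ1 : ζ ≠ 1 := by
        intro hone
        rw [hζ, Complex.exp_eq_one_iff] at hone
        obtain ⟨n, hn⟩ := hone
        apply hb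
        have h3 : (-((b : ℂ) / Q)) * (2 * Real.pi * Complex.I)
            = (n : ℂ) * (2 * Real.pi * Complex.I) := by linear_combination hn
        have h4 : -((b : ℂ) / Q) = n := mul_right_cancel₀ h2pi h3
        have h5 : (b : ℂ) / Q = -n := by linear_combination -h4
        rw [div_eq_iff hQc] at h5
        have h6 : (b : ℂ) = (((Q : ℤ) * -n : ℤ) : ℂ) := by push_cast; linear_combination h5
        exact ⟨-n, by exact_mod_cast h6⟩
      rw [geom_sum_eq hζ1, hζQ, sub_self, zero_div, mul_zero]
      rw [if_neg ?_]
      rintro ⟨n, m, h1, h2⟩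
      have h3 : (N : ℤ) * b = (N : ℤ) * (m * Q) := by linear_combination h2
      exact hb ⟨m, (mul_left_cancel₀ hNz h3).trans (mul_comm _ _)⟩
  · have hcond : ¬ ∃ n m : ℤ, k = n * ((M : ℤ) / Q) ∧ l = m * ((Q : ℤ) * N) := by
      rintro ⟨n, m, rfl, rfl⟩
      exact hkl ⟨⟨n, by rw [hdz]; ring⟩, ⟨m * Q, by ring⟩⟩
    rw [if_neg hcond]
    apply Finset.sum_eq_zero
    intro k' _
    rw [hxs (k' : ℤ) 0, hxs ((k' : ℤ) - k) (0 - l)]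
    by_cases h1 : (d : ℤ) ∣ (k' : ℤ)
    · have h2 : ¬ ((d : ℤ) ∣ ((k' : ℤ) - k) ∧ (N : ℤ) ∣ ((0 : ℤ) - l)) := by
        rintro ⟨ha, hb⟩
        refine hkl ⟨?_, ?_⟩
        · have := dvd_sub h1 ha
          simpa using this
        · rw [zero_sub, dvd_neg] at hb
          exact hb
      rw [if_neg h2]
      simp
    · rw [if_neg (fun h => h1 h.1), zero_mul, zero_mul]
end

section
/- Crystallization on the effective lattice: if h : ℤ×ℤ → ℂ is supported on S ⊆ [0, M/Q − 1] × [−QN/2, QN/2 − 1] (Q even divides M, N even makes QN even), then the translates of S by lattice points of Λ_Q = {(nM/Q, mQN) : n,m ∈ ℤ} are pairwise disjoint, and consequently the restriction of (h *_σ A)[k,l] to any fundamental domain of Λ_Q determines h uniquely when A is supported on Λ_Q with A[0,0] ≠ 0 and A nonzero exactly on Λ_Q with unimodular-scaled values A[nM/Q, mQN] = E_p. -/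
open scoped Classical

lemma aux_mul_zero (b n : ℤ) (hb : 0 < b) (h1 : -b < n * b) (h2 : n * b < b) : n = 0 := by
  rcases lt_trichotomy n 0 with hn | hn | hn
  · have hn1 : n ≤ -1 := by omega
    nlinarith
  · exact hn
  · have hn1 : 1 ≤ n := hn
    nlinarith

/-- Crystallization on the effective lattice Λ_Q: translates of the support of h
by Λ_Q are pairwise disjoint, and h can be read off from h *_σ A on S. -/
theorem stmt17 (M N Q : ℕ) (hM : 0 < M) (hN : 0 < N) (hQ : 0 < Q) (hQM : Q ∣ M)
    (Ep : ℝ) (hEp : 0 < Ep) (h A : ℤ → ℤ → ℂ)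
    (hfin : Set.Finite (Function.support fun p : ℤ × ℤ => h p.1 p.2))
    (hsupp : ∀ k l : ℤ, h k l ≠ 0 →
      0 ≤ k ∧ k ≤ (M : ℤ) / Q - 1 ∧ -(((Q : ℤ) * N) / 2) ≤ l ∧ l ≤ ((Q : ℤ) * N) / 2 - 1)
    (hA : ∀ k l : ℤ, A k l =
      if ∃ n m : ℤ, k = n * ((M : ℤ) / Q) ∧ l = m * ((Q : ℤ) * N)
      then ((Ep : ℝ) : ℂ) else 0) :
    (∀ n m n' m' : ℤ, (n, m) ≠ (n', m') → ∀ k l : ℤ,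
      h (k - n * ((M : ℤ) / Q)) (l - m * ((Q : ℤ) * N)) = 0 ∨
      h (k - n' * ((M : ℤ) / Q)) (l - m' * ((Q : ℤ) * N)) = 0) ∧
    (∀ k l : ℤ, 0 ≤ k → k ≤ (M : ℤ) / Q - 1 →
      -(((Q : ℤ) * N) / 2) ≤ l → l ≤ ((Q : ℤ) * N) / 2 - 1 →
      (∑ᶠ q : ℤ × ℤ, h q.1 q.2 * A (k - q.1) (l - q.2) *
        Complex.exp (2 * Real.pi * Complex.I * ((q.2 : ℂ) * ((k : ℂ) - q.1) / (M * N))))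
      = ((Ep : ℝ) : ℂ) * h k l) := by
  -- basic positivity facts
  obtain ⟨c, hc⟩ := hQM
  have hc0 : 0 < (c : ℤ) := by
    rcases Nat.eq_zero_or_pos c with rfl | hp
    · simp at hc; omega
    · exact_mod_cast hp
  have hMQ : (M : ℤ) / Q = (c : ℤ) := by
    have : (M : ℤ) = (Q : ℤ) * c := by exact_mod_cast congrArg Nat.cast hc
    rw [this, Int.mul_ediv_cancel_left _ (by exact_mod_cast hQ.ne')]
  have ha : 0 < (M : ℤ) / Q := hMQ ▸ hc0
  have hb : 0 < (Q : ℤ) * N := by positivity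
  have hhalf : 2 * (((Q : ℤ) * N) / 2) ≤ (Q : ℤ) * N := by omega
  set a : ℤ := (M : ℤ) / Q with ha_def
  set b : ℤ := (Q : ℤ) * N with hb_def
  constructor
  · intro n m n' m' hne k l
    by_contra hcon
    push_neg at hcon
    obtain ⟨h1, h2⟩ := hcon
    obtain ⟨p1, p2, p3, p4⟩ := hsupp _ _ h1
    obtain ⟨q1, q2, q3, q4⟩ := hsupp _ _ h2
    have hn : n = n' := by
      have key : (n' - n) * a = (k - n * a) - (k - n' * a) := by ring
      have := aux_mul_zero a (n' - n) ha (by omega) (by omega)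
      omega
    have hm : m = m' := by
      have key : (m' - m) * b = (l - m * b) - (l - m' * b) := by ring
      have := aux_mul_zero b (m' - m) hb (by omega) (by omega)
      omega
    exact hne (by rw [hn, hm])
  · intro k l hk0 hk1 hl0 hl1
    have hmain : ∀ q : ℤ × ℤ, q ≠ (k, l) →
        h q.1 q.2 * A (k - q.1) (l - q.2) *
          Complex.exp (2 * Real.pi * Complex.I * ((q.2 : ℂ) * ((k : ℂ) - q.1) / (M * N))) = 0 := by
      intro q hq
      by_cases hh : h q.1 q.2 = 0
      · simp [hh]
      by_cases hAz : A (k - q.1) (l - q.2) = 0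
      · simp [hAz]
      obtain ⟨p1, p2, p3, p4⟩ := hsupp _ _ hh
      rw [hA] at hAz
      by_cases hex : ∃ n m : ℤ, k - q.1 = n * a ∧ l - q.2 = m * b
      · obtain ⟨n, m, hn, hm⟩ := hex
        have hn0 : n = 0 := aux_mul_zero a n ha (by linarith) (by linarith)
        have hm0 : m = 0 := aux_mul_zero b m hb (by linarith) (by linarith)
        rw [hn0] at hn
        rw [hm0] at hm
        simp only [zero_mul] at hn hm
        exact absurd (Prod.ext (by omega) (by omega)) hq
      · exact absurd (if_neg hex) hAz
    rw [finsum_eq_single _ ((k, l) : ℤ × ℤ) hmain]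
    have hA00 : A (k - k) (l - l) = ((Ep : ℝ) : ℂ) := by
      rw [hA]
      rw [if_pos ⟨0, 0, by simp, by simp⟩]
    simp only [hA00]
    have : ((k : ℂ) - (k : ℂ)) = 0 := sub_self _
    rw [this]
    simp [mul_comm]
end
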